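/- arXiv:1910.08016 — 5 statements merged into one kernel-verified Lean document; each statement's English description precedes it below -/
import Mathlib

section
/- Let η ∈ ℝ^q, Δ: [0,∞) → ℝ continuous, Γ and P symmetric positive definite q×q matrices, and G: ℝ^q → ℝ^q a locally Lipschitz mapping that is strongly P-monotone with constant ρ > 0. Consider a solution η̂(t) of the ODE η̂'(t) = −Δ(t)²·Γ·P·(G(η̂(t)) − G(η)). Then the function t ↦ (η̂(t)−η)ᵀ Γ⁻¹ (η̂(t)−η) is nonincreasing; in particular |η̂(t₂)−η| is bounded in terms of |η̂(t₁)−η| via the condition number of Γ for all t₂ ≥ t₁. -/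
open Matrix

/-- Proposition 3(i): the weighted norm of the parameter estimation error of the
CT DREM estimator is nonincreasing. -/
theorem ct_drem_error_nonincreasing {q : ℕ}
    (η : Fin q → ℝ) (Δ : ℝ → ℝ) (hΔ : Continuous Δ)
    (Γ P : Matrix (Fin q) (Fin q) ℝ)
    (hΓ : Γ.PosDef) (hΓsym : Γ.IsSymm) (hP : P.PosDef) (hPsym : P.IsSymm)
    (G : (Fin q → ℝ) → (Fin q → ℝ)) (hGlip : LocallyLipschitz G)
    (ρ : ℝ) (hρ : 0 < ρ)
    (hmono : ∀ a b : Fin q → ℝ,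
      ρ * ((a - b) ⬝ᵥ (a - b)) ≤ (a - b) ⬝ᵥ (P *ᵥ (G a - G b)))
    (ηhat : ℝ → (Fin q → ℝ))
    (hode : ∀ t, 0 ≤ t →
      HasDerivAt ηhat (-(Δ t) ^ 2 • (Γ *ᵥ (P *ᵥ (G (ηhat t) - G η)))) t) :
    ∀ t₁ t₂, 0 ≤ t₁ → t₁ ≤ t₂ →
      (ηhat t₂ - η) ⬝ᵥ (Γ⁻¹ *ᵥ (ηhat t₂ - η)) ≤
        (ηhat t₁ - η) ⬝ᵥ (Γ⁻¹ *ᵥ (ηhat t₁ - η)) := by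
  have hΓdet : IsUnit Γ.det := isUnit_iff_ne_zero.mpr hΓ.det_pos.ne'
  have hΓinv : Γ⁻¹ * Γ = 1 := nonsing_inv_mul Γ hΓdet
  have hΓinvsym : Γ⁻¹.IsSymm := by
    unfold Matrix.IsSymm
    rw [transpose_nonsing_inv, hΓsym.eq]
  set e : ℝ → Fin q → ℝ := fun t => ηhat t - η with he
  set f : ℝ → ℝ := fun t => e t ⬝ᵥ (Γ⁻¹ *ᵥ e t) with hf
  set v : ℝ → Fin q → ℝ :=
    fun t => -(Δ t) ^ 2 • (Γ *ᵥ (P *ᵥ (G (ηhat t) - G η))) with hv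
  have hE : ∀ t, 0 ≤ t → HasDerivAt e (v t) t := by
    intro t ht
    exact (hode t ht).sub_const η
  have key : ∀ t, 0 ≤ t →
      HasDerivAt f (2 * (-(Δ t) ^ 2 * (e t ⬝ᵥ (P *ᵥ (G (ηhat t) - G η))))) t := by
    intro t ht
    have hcomp : ∀ i, HasDerivAt (fun s => e s i) (v t i) t :=
      fun i => (hasDerivAt_pi.mp (hE t ht)) i
    have hsum : HasDerivAt
        (fun s => ∑ i, ∑ j, e s i * (Γ⁻¹ i j * e s j))
        (∑ i, ∑ j, (v t i * (Γ⁻¹ i j * e t j) + e t i * (Γ⁻¹ i j * v t j))) t := by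
      apply HasDerivAt.fun_sum
      intro i _
      apply HasDerivAt.fun_sum
      intro j _
      exact (hcomp i).mul ((hcomp j).const_mul (Γ⁻¹ i j))
    have hfeq : f = fun s => ∑ i, ∑ j, e s i * (Γ⁻¹ i j * e s j) := by
      funext s
      simp [hf, dotProduct, mulVec, Finset.mul_sum]
    have hderiv_eq :
        (∑ i, ∑ j, (v t i * (Γ⁻¹ i j * e t j) + e t i * (Γ⁻¹ i j * v t j)))
          = v t ⬝ᵥ (Γ⁻¹ *ᵥ e t) + e t ⬝ᵥ (Γ⁻¹ *ᵥ v t) := by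
      simp [dotProduct, mulVec, Finset.mul_sum, Finset.sum_add_distrib]
    have hsymm : v t ⬝ᵥ (Γ⁻¹ *ᵥ e t) = e t ⬝ᵥ (Γ⁻¹ *ᵥ v t) := by
      rw [dotProduct_mulVec, ← mulVec_transpose, hΓinvsym.eq, dotProduct_comm]
    have hinv : Γ⁻¹ *ᵥ v t = -(Δ t) ^ 2 • (P *ᵥ (G (ηhat t) - G η)) := by
      rw [hv]
      rw [mulVec_smul, mulVec_mulVec, hΓinv, one_mulVec]
    have : v t ⬝ᵥ (Γ⁻¹ *ᵥ e t) + e t ⬝ᵥ (Γ⁻¹ *ᵥ v t)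
        = 2 * (-(Δ t) ^ 2 * (e t ⬝ᵥ (P *ᵥ (G (ηhat t) - G η)))) := by
      rw [hsymm, hinv, dotProduct_smul, smul_eq_mul]
      ring
    rw [hderiv_eq, this] at hsum
    rwa [hfeq]
  have hnonpos : ∀ t, 0 ≤ t →
      2 * (-(Δ t) ^ 2 * (e t ⬝ᵥ (P *ᵥ (G (ηhat t) - G η)))) ≤ 0 := by
    intro t ht
    have h1 : 0 ≤ e t ⬝ᵥ (P *ᵥ (G (ηhat t) - G η)) := by
      have := hmono (ηhat t) η
      have hq : 0 ≤ (ηhat t - η) ⬝ᵥ (ηhat t - η) := by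
        simp only [dotProduct]
        exact Finset.sum_nonneg fun i _ => mul_self_nonneg _
      have : 0 ≤ (ηhat t - η) ⬝ᵥ (P *ᵥ (G (ηhat t) - G η)) :=
        le_trans (mul_nonneg hρ.le hq) this
      simpa [he] using this
    have h2 : -(Δ t) ^ 2 ≤ 0 := neg_nonpos.mpr (sq_nonneg _)
    have := mul_nonpos_of_nonpos_of_nonneg h2 h1
    linarith
  have hanti : AntitoneOn f (Set.Ici (0 : ℝ)) := by
    apply antitoneOn_of_deriv_nonpos (convex_Ici 0)
    · intro t ht
      exact ((key t ht).continuousAt).continuousWithinAt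
    · intro t ht
      rw [interior_Ici] at ht
      exact ((key t (le_of_lt ht)).differentiableAt).differentiableWithinAt
    · intro t ht
      rw [interior_Ici] at ht
      rw [(key t (le_of_lt ht)).deriv]
      exact hnonpos t (le_of_lt ht)
  intro t₁ t₂ h1 h12
  exact hanti (Set.mem_Ici.mpr h1) (Set.mem_Ici.mpr (le_trans h1 h12)) h12
end

section
/- Let η ∈ ℝ^q, Δ: [0,∞) → ℝ continuous with ∫₀^∞ Δ(s)² ds = ∞, Γ and P symmetric positive definite q×q matrices, and G: ℝ^q → ℝ^q locally Lipschitz and strongly P-monotone with constant ρ > 0. Then every solution η̂(t) of η̂'(t) = −Δ(t)²·Γ·P·(G(η̂(t)) − G(η)) satisfies |η̂(t) − η| → 0 as t → ∞. -/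
open Matrix
open scoped Topology

lemma drem_dotProduct_nonneg {q : ℕ} {A : Matrix (Fin q) (Fin q) ℝ} (hA : A.PosSemidef)
    (x : Fin q → ℝ) : 0 ≤ x ⬝ᵥ (A *ᵥ x) := by
  simpa using hA.re_dotProduct_nonneg x

lemma drem_dotProduct_pos {q : ℕ} {A : Matrix (Fin q) (Fin q) ℝ} (hA : A.PosDef)
    {x : Fin q → ℝ} (hx : x ≠ 0) : 0 < x ⬝ᵥ (A *ᵥ x) := by
  simpa using hA.re_dotProduct_pos hx

lemma drem_quad_bounds {q : ℕ} (A : Matrix (Fin q) (Fin q) ℝ) (hA : A.PosDef) :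
    ∃ μ M : ℝ, 0 < μ ∧ 0 < M ∧ ∀ x : Fin q → ℝ,
      μ * (x ⬝ᵥ x) ≤ x ⬝ᵥ (A *ᵥ x) ∧ x ⬝ᵥ (A *ᵥ x) ≤ M * (x ⬝ᵥ x) := by
  rcases Nat.eq_zero_or_pos q with hq | hq
  · subst hq
    exact ⟨1, 1, one_pos, one_pos, fun x => by simp [dotProduct]⟩
  set S : Set (Fin q → ℝ) := {x | x ⬝ᵥ x = 1} with hS
  have hg : Continuous fun x : Fin q → ℝ => x ⬝ᵥ x :=
    Continuous.dotProduct continuous_id continuous_id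
  have hf : Continuous fun x : Fin q → ℝ => x ⬝ᵥ (A *ᵥ x) :=
    Continuous.dotProduct continuous_id ((Continuous.matrix_mulVec continuous_const continuous_id))
  have hSclosed : IsClosed S := isClosed_eq hg continuous_const
  have hSbdd : Bornology.IsBounded S := by
    rw [Metric.isBounded_iff_subset_closedBall 0]
    refine ⟨1, fun x hx => ?_⟩
    rw [Metric.mem_closedBall, dist_zero_right]
    rw [pi_norm_le_iff_of_nonneg zero_le_one]
    intro i
    rw [Real.norm_eq_abs, abs_le_one_iff_mul_self_le_one]
    calc x i * x i ≤ ∑ j, x j * x j :=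
          Finset.single_le_sum (f := fun j => x j * x j)
            (fun j _ => mul_self_nonneg _) (Finset.mem_univ i)
      _ = 1 := hx
  have hScompact : IsCompact S := Metric.isCompact_of_isClosed_isBounded hSclosed hSbdd
  have hSne : S.Nonempty := by
    refine ⟨Pi.single (⟨0, hq⟩ : Fin q) 1, ?_⟩
    show Pi.single _ _ ⬝ᵥ _ = 1
    rw [single_dotProduct, Pi.single_eq_same, one_mul]
  obtain ⟨xm, hxmS, hxm⟩ := hScompact.exists_isMinOn hSne hf.continuousOn
  obtain ⟨xM, hxMS, hxM⟩ := hScompact.exists_isMaxOn hSne hf.continuousOn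
  have hxmne : xm ≠ 0 := by
    intro h
    rw [hS, Set.mem_setOf_eq, h] at hxmS
    simp at hxmS
  refine ⟨xm ⬝ᵥ (A *ᵥ xm), xM ⬝ᵥ (A *ᵥ xM),
    drem_dotProduct_pos hA hxmne, ?_, fun x => ?_⟩
  · exact lt_of_lt_of_le (drem_dotProduct_pos hA hxmne) (hxm hxMS)
  rcases eq_or_ne x 0 with rfl | hx
  · simp
  · have hxx : 0 < x ⬝ᵥ x := by
      rcases lt_or_eq_of_le (Finset.sum_nonneg fun i _ => mul_self_nonneg (x i) : (0:ℝ) ≤ x ⬝ᵥ x) with h | h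
      · exact h
      · exact absurd (dotProduct_self_eq_zero.mp h.symm) hx
    set r : ℝ := Real.sqrt (x ⬝ᵥ x) with hr
    have hrpos : 0 < r := Real.sqrt_pos.mpr hxx
    have hr2 : r * r = x ⬝ᵥ x := Real.mul_self_sqrt hxx.le
    set y : Fin q → ℝ := r⁻¹ • x with hy
    have hyS : y ∈ S := by
      show y ⬝ᵥ y = 1
      rw [hy, smul_dotProduct, dotProduct_smul, smul_eq_mul, smul_eq_mul, ← hr2]
      field_simp
    have hyf : y ⬝ᵥ (A *ᵥ y) = (r⁻¹ * r⁻¹) * (x ⬝ᵥ (A *ᵥ x)) := by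
      rw [hy, smul_dotProduct, mulVec_smul, dotProduct_smul, smul_eq_mul, smul_eq_mul]
      ring
    constructor
    · have := hxm hyS
      simp only [Set.mem_setOf_eq] at this
      rw [hyf] at this
      have h2 : (xm ⬝ᵥ (A *ᵥ xm)) * (r * r) ≤ x ⬝ᵥ (A *ᵥ x) := by
        rw [← mul_le_mul_iff_of_pos_right (by positivity : 0 < r * r)] at this
        calc (xm ⬝ᵥ (A *ᵥ xm)) * (r * r) ≤ (r⁻¹ * r⁻¹) * (x ⬝ᵥ (A *ᵥ x)) * (r * r) := this
          _ = x ⬝ᵥ (A *ᵥ x) := by field_simp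
      rwa [← hr2]
    · have := hxM hyS
      simp only [Set.mem_setOf_eq] at this
      rw [hyf] at this
      have h2 : x ⬝ᵥ (A *ᵥ x) ≤ (xM ⬝ᵥ (A *ᵥ xM)) * (r * r) := by
        rw [← mul_le_mul_iff_of_pos_right (by positivity : 0 < r * r)] at this
        calc x ⬝ᵥ (A *ᵥ x) = (r⁻¹ * r⁻¹) * (x ⬝ᵥ (A *ᵥ x)) * (r * r) := by field_simp
          _ ≤ (xM ⬝ᵥ (A *ᵥ xM)) * (r * r) := this
      rwa [← hr2]

lemma drem_hasDerivAt_quad {q : ℕ} (B : Matrix (Fin q) (Fin q) ℝ)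
    (e : ℝ → Fin q → ℝ) (d : Fin q → ℝ) (t : ℝ) (he : HasDerivAt e d t) :
    HasDerivAt (fun s => e s ⬝ᵥ (B *ᵥ e s))
      (d ⬝ᵥ (B *ᵥ e t) + e t ⬝ᵥ (B *ᵥ d)) t := by
  have h : ∀ i, HasDerivAt (fun s => e s i) (d i) t := hasDerivAt_pi.1 he
  have H : HasDerivAt (fun s => ∑ i, ∑ j, e s i * (B i j * e s j))
      (∑ i, ∑ j, (d i * (B i j * e t j) + e t i * (B i j * d j))) t := by
    apply HasDerivAt.fun_sum
    intro i _
    apply HasDerivAt.fun_sum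
    intro j _
    exact (h i).mul ((h j).const_mul (B i j))
  convert H using 1
  · funext s
    simp [dotProduct, mulVec, Finset.mul_sum]
  · simp [dotProduct, mulVec, Finset.mul_sum, Finset.sum_add_distrib]

lemma drem_dot_symm {q : ℕ} {B : Matrix (Fin q) (Fin q) ℝ} (hB : B.IsSymm)
    (a b : Fin q → ℝ) : a ⬝ᵥ (B *ᵥ b) = b ⬝ᵥ (B *ᵥ a) := by
  rw [dotProduct_mulVec, ← hB.eq, vecMul_transpose, dotProduct_comm, hB.eq]

/-- Proposition 3(ii): parameter convergence of the CT DREM estimator under the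
excitation condition Δ ∉ L₂. -/
theorem ct_drem_convergence {q : ℕ}
    (η : Fin q → ℝ) (Δ : ℝ → ℝ) (hΔ : Continuous Δ)
    (hΔL2 : Filter.Tendsto (fun t => ∫ s in (0:ℝ)..t, (Δ s) ^ 2)
      Filter.atTop Filter.atTop)
    (Γ P : Matrix (Fin q) (Fin q) ℝ)
    (hΓ : Γ.PosDef) (hΓsym : Γ.IsSymm) (hP : P.PosDef) (hPsym : P.IsSymm)
    (G : (Fin q → ℝ) → (Fin q → ℝ)) (hGlip : LocallyLipschitz G)
    (ρ : ℝ) (hρ : 0 < ρ)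
    (hmono : ∀ a b : Fin q → ℝ,
      ρ * ((a - b) ⬝ᵥ (a - b)) ≤ (a - b) ⬝ᵥ (P *ᵥ (G a - G b)))
    (ηhat : ℝ → (Fin q → ℝ))
    (hode : ∀ t, 0 ≤ t →
      HasDerivAt ηhat (-(Δ t) ^ 2 • (Γ *ᵥ (P *ᵥ (G (ηhat t) - G η)))) t) :
    Filter.Tendsto (fun t => Real.sqrt ((ηhat t - η) ⬝ᵥ (ηhat t - η)))
      Filter.atTop (𝓝 0) := by
  classical
  set e : ℝ → Fin q → ℝ := fun t => ηhat t - η with he_def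
  have het : ∀ t, e t = ηhat t - η := fun _ => rfl
  set B : Matrix (Fin q) (Fin q) ℝ := Γ⁻¹ with hB_def
  have hB : B.PosDef := hΓ.inv
  have hBsym : B.IsSymm := by
    rw [hB_def, Matrix.IsSymm, Matrix.transpose_nonsing_inv, hΓsym.eq]
  obtain ⟨μ, M, hμ, hM, hbounds⟩ := drem_quad_bounds B hB
  set w : ℝ → Fin q → ℝ := fun t => P *ᵥ (G (ηhat t) - G η) with hw_def
  set V : ℝ → ℝ := fun t => e t ⬝ᵥ (B *ᵥ e t) with hV_def
  set V' : ℝ → ℝ := fun t => 2 * (-(Δ t) ^ 2 * (e t ⬝ᵥ w t)) with hV'_def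
  set d : ℝ → Fin q → ℝ := fun t => -(Δ t) ^ 2 • (Γ *ᵥ w t) with hd_def
  have hdetΓ : IsUnit Γ.det := isUnit_iff_ne_zero.mpr hΓ.det_pos.ne'
  have he : ∀ t, 0 ≤ t → HasDerivAt e (d t) t := fun t ht => (hode t ht).sub_const η
  have hBd : ∀ t, B *ᵥ d t = -(Δ t) ^ 2 • w t := by
    intro t
    rw [hd_def, hB_def]
    show Γ⁻¹ *ᵥ (-(Δ t) ^ 2 • (Γ *ᵥ w t)) = _
    rw [Matrix.mulVec_smul, Matrix.mulVec_mulVec, Matrix.nonsing_inv_mul Γ hdetΓ,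
      Matrix.one_mulVec]
  have hV' : ∀ t, 0 ≤ t → HasDerivAt V (V' t) t := by
    intro t ht
    have H := drem_hasDerivAt_quad B e (d t) t (he t ht)
    convert H using 1
    rw [drem_dot_symm hBsym (d t) (e t), hBd t, dotProduct_smul, smul_eq_mul]
    ring
  set c : ℝ := 2 * ρ / M with hc_def
  have hc : 0 < c := by positivity
  have hcM : c * M = 2 * ρ := by rw [hc_def, div_mul_cancel₀ _ hM.ne']
  have key : ∀ t, 0 ≤ t → V' t + c * Δ t ^ 2 * V t ≤ 0 := by
    intro t ht
    have h1 : ρ * (e t ⬝ᵥ e t) ≤ e t ⬝ᵥ w t := hmono (ηhat t) η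
    have h2 : V t ≤ M * (e t ⬝ᵥ e t) := (hbounds (e t)).2
    have hd2 : (0:ℝ) ≤ Δ t ^ 2 := sq_nonneg _
    have t1 : c * Δ t ^ 2 * V t ≤ c * Δ t ^ 2 * (M * (e t ⬝ᵥ e t)) :=
      mul_le_mul_of_nonneg_left h2 (by positivity)
    have t2 : c * Δ t ^ 2 * (M * (e t ⬝ᵥ e t)) = 2 * Δ t ^ 2 * (ρ * (e t ⬝ᵥ e t)) := by
      linear_combination (Δ t ^ 2 * (e t ⬝ᵥ e t)) * hcM
    have t3 : 2 * Δ t ^ 2 * (ρ * (e t ⬝ᵥ e t)) ≤ 2 * Δ t ^ 2 * (e t ⬝ᵥ w t) :=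
      mul_le_mul_of_nonneg_left h1 (by positivity)
    have : V' t = -(2 * Δ t ^ 2 * (e t ⬝ᵥ w t)) := by rw [hV'_def]; ring
    linarith
  set I : ℝ → ℝ := fun t => ∫ s in (0:ℝ)..t, Δ s ^ 2 with hI_def
  have hI : ∀ t, HasDerivAt I (Δ t ^ 2) t := fun t =>
    ((hΔ.pow 2).integral_hasStrictDerivAt 0 t).hasDerivAt
  set W : ℝ → ℝ := fun t => V t * Real.exp (c * I t) with hW_def
  have hW : ∀ t, 0 ≤ t → HasDerivAt W
      (V' t * Real.exp (c * I t) + V t * (Real.exp (c * I t) * (c * Δ t ^ 2))) t :=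
    fun t ht => (hV' t ht).mul (((hI t).const_mul c).exp)
  have hWanti : AntitoneOn W (Set.Ici (0:ℝ)) := by
    apply antitoneOn_of_deriv_nonpos (convex_Ici 0)
    · exact fun t ht => ((hW t ht).continuousAt).continuousWithinAt
    · intro t ht
      rw [interior_Ici] at ht
      exact ((hW t (le_of_lt ht)).differentiableAt).differentiableWithinAt
    · intro t ht
      rw [interior_Ici] at ht
      rw [(hW t (le_of_lt ht)).deriv]
      have h0 : (V' t + c * Δ t ^ 2 * V t) * Real.exp (c * I t) ≤ 0 :=
        mul_nonpos_of_nonpos_of_nonneg (key t (le_of_lt ht)) (Real.exp_pos _).le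
      nlinarith [h0]
  have hVpos : ∀ t, 0 ≤ V t := fun t => drem_dotProduct_nonneg hB.posSemidef (e t)
  have hW0 : W 0 = V 0 := by
    rw [hW_def]
    simp [hI_def, intervalIntegral.integral_same]
  have hVbound : ∀ t, 0 ≤ t → V t ≤ V 0 * Real.exp (-(c * I t)) := by
    intro t ht
    have hWt : W t ≤ W 0 := hWanti Set.self_mem_Ici ht ht
    rw [hW0] at hWt
    rw [Real.exp_neg, ← div_eq_mul_inv, le_div_iff₀ (Real.exp_pos _)]
    exact hWt
  have hItop : Filter.Tendsto (fun t => c * I t) Filter.atTop Filter.atTop :=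
    hΔL2.const_mul_atTop hc
  have hexp0 : Filter.Tendsto (fun t => Real.exp (-(c * I t))) Filter.atTop (𝓝 0) :=
    Real.tendsto_exp_atBot.comp ((Filter.tendsto_neg_atBot_iff.mpr hItop))
  have hub : Filter.Tendsto (fun t => V 0 * Real.exp (-(c * I t))) Filter.atTop (𝓝 0) := by
    simpa using hexp0.const_mul (V 0)
  have hV0 : Filter.Tendsto V Filter.atTop (𝓝 0) := by
    apply tendsto_of_tendsto_of_tendsto_of_le_of_le' tendsto_const_nhds hub
    · exact Filter.Eventually.of_forall hVpos
    · exact (Filter.eventually_ge_atTop 0).mono fun t ht => hVbound t ht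
  have heepos : ∀ t, (0:ℝ) ≤ e t ⬝ᵥ e t :=
    fun t => Finset.sum_nonneg fun i _ => mul_self_nonneg (e t i)
  have hee : Filter.Tendsto (fun t => e t ⬝ᵥ e t) Filter.atTop (𝓝 0) := by
    have hup : Filter.Tendsto (fun t => V t / μ) Filter.atTop (𝓝 0) := by
      simpa using hV0.div_const μ
    apply tendsto_of_tendsto_of_tendsto_of_le_of_le' tendsto_const_nhds hup
    · exact Filter.Eventually.of_forall heepos
    · refine Filter.Eventually.of_forall fun t => ?_
      rw [le_div_iff₀ hμ]
      have := (hbounds (e t)).1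
      linarith
  exact (Real.continuous_sqrt.tendsto' 0 0 (by simp)).comp hee
end

section
/- Let η ∈ ℝ^q, Δ: ℕ → ℝ a sequence, P a symmetric positive definite q×q matrix, G: ℝ^q → ℝ^q strongly P-monotone with constant ρ > 0 and globally Lipschitz with constant ν, γ > 0 with σ := 2γρ − γ²ν²λ_max(P)² > 0, and κ ≥ max{1, σ}. Consider the iteration η̂(k+1) = η̂(k) − γ·P·(Δ(k)²/(1+κΔ(k)²))·(G(η̂(k)) − G(η)). Then V(k) := |η̂(k)−η|² satisfies V(k+1) ≤ ((1 + (κ−σ)Δ(k)²)/(1 + κΔ(k)²))·V(k) for all k; in particular |η̂(k)−η| is monotonically nonincreasing in k. -/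
open Matrix

lemma spec_bound {q : ℕ} (P : Matrix (Fin q) (Fin q) ℝ) (hP : P.PosDef) (hPsym : P.IsSymm)
    (lam : ℝ) (hlam : IsGreatest (Set.range hP.1.eigenvalues) lam)
    (g : Fin q → ℝ) :
    (P *ᵥ g) ⬝ᵥ (P *ᵥ g) ≤ lam ^ 2 * (g ⬝ᵥ g) := by
  classical
  set b := hP.1.eigenvectorBasis with hb
  have hdot : ∀ x y : EuclideanSpace ℝ (Fin q),
      (x : Fin q → ℝ) ⬝ᵥ (y : Fin q → ℝ) = inner ℝ x y := by
    intro x y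
    simp [dotProduct, PiLp.inner_apply, mul_comm]
  have hnorm : ∀ v : EuclideanSpace ℝ (Fin q),
      (inner ℝ v v : ℝ) = ∑ i, (b.repr v i) ^ 2 :=
    fun v => calc (inner ℝ v v : ℝ) = inner ℝ (b.repr v) (b.repr v) :=
        (b.repr.inner_map_map v v).symm
      _ = ∑ i, (b.repr v i) ^ 2 := by
        simp only [PiLp.inner_apply, RCLike.inner_apply, conj_trivial, sq]
  have hPg : ∀ i, b.repr (WithLp.toLp 2 (P *ᵥ g : Fin q → ℝ)) i
      = hP.1.eigenvalues i * b.repr (WithLp.toLp 2 g) i := by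
    intro i
    have hmv : P *ᵥ (b i : Fin q → ℝ) = hP.1.eigenvalues i • (b i : Fin q → ℝ) :=
      hP.1.mulVec_eigenvectorBasis i
    rw [b.repr_apply_apply, ← hdot (b i) (WithLp.toLp 2 (P *ᵥ g : Fin q → ℝ))]
    show (b i : Fin q → ℝ) ⬝ᵥ (P *ᵥ g) = _
    rw [dotProduct_mulVec, ← Matrix.mulVec_transpose, show Pᵀ = P from hPsym, hmv,
      b.repr_apply_apply, ← hdot (b i) (WithLp.toLp 2 g)]
    simp [dotProduct, PiLp.smul_apply, smul_eq_mul, Finset.mul_sum, mul_assoc]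
  have hlam_pos : 0 < lam := by
    obtain ⟨i, hi⟩ := hlam.1
    exact hi ▸ hP.eigenvalues_pos i
  have key : ((P *ᵥ g) : Fin q → ℝ) ⬝ᵥ (P *ᵥ g)
      = ∑ i, (hP.1.eigenvalues i * b.repr (WithLp.toLp 2 g) i) ^ 2 := by
    rw [hdot, hnorm]
    exact Finset.sum_congr rfl fun i _ => by rw [hPg]
  rw [key, hdot, hnorm, Finset.mul_sum]
  refine Finset.sum_le_sum fun i _ => ?_
  have h1 : 0 < hP.1.eigenvalues i := hP.eigenvalues_pos i
  have h2 : hP.1.eigenvalues i ≤ lam := hlam.2 ⟨i, rfl⟩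
  rw [mul_pow]
  have : (hP.1.eigenvalues i) ^ 2 ≤ lam ^ 2 := by nlinarith
  nlinarith [sq_nonneg (b.repr (WithLp.toLp 2 g) i)]

lemma dot_expand {q : ℕ} (x y : Fin q → ℝ) (c : ℝ) :
    (x - c • y) ⬝ᵥ (x - c • y)
      = x ⬝ᵥ x - 2 * c * (x ⬝ᵥ y) + c ^ 2 * (y ⬝ᵥ y) := by
  simp [sub_dotProduct, dotProduct_sub, smul_dotProduct, dotProduct_smul,
    dotProduct_comm y x]
  ring

lemma dot_self_nonneg {q : ℕ} (x : Fin q → ℝ) : 0 ≤ x ⬝ᵥ x :=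
  Finset.sum_nonneg fun i _ => mul_self_nonneg (x i)

set_option maxHeartbeats 2000000 in
/-- Proposition 4, Property P1: one-step Lyapunov inequality and monotonicity of
the DT DREM parameter error. -/
theorem dt_drem_P1 {q : ℕ}
    (η : Fin q → ℝ) (Δ : ℕ → ℝ)
    (P : Matrix (Fin q) (Fin q) ℝ) (hP : P.PosDef) (hPsym : P.IsSymm)
    (lam : ℝ) (hlam : IsGreatest (Set.range hP.1.eigenvalues) lam)
    (G : (Fin q → ℝ) → (Fin q → ℝ)) (ρ ν γ κ σ : ℝ)
    (hρ : 0 < ρ) (hν : 0 < ν) (hγ : 0 < γ)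
    (hmono : ∀ a b : Fin q → ℝ,
      ρ * ((a - b) ⬝ᵥ (a - b)) ≤ (a - b) ⬝ᵥ (P *ᵥ (G a - G b)))
    (hlip : ∀ a b : Fin q → ℝ,
      Real.sqrt ((G a - G b) ⬝ᵥ (G a - G b)) ≤ ν * Real.sqrt ((a - b) ⬝ᵥ (a - b)))
    (hσ : σ = 2 * γ * ρ - γ ^ 2 * ν ^ 2 * lam ^ 2) (hσpos : 0 < σ)
    (hκ : max 1 σ ≤ κ)
    (ηhat : ℕ → (Fin q → ℝ))
    (hstep : ∀ k, ηhat (k + 1) =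
      ηhat k - (γ * ((Δ k) ^ 2 / (1 + κ * (Δ k) ^ 2))) • (P *ᵥ (G (ηhat k) - G η))) :
    (∀ k, (ηhat (k + 1) - η) ⬝ᵥ (ηhat (k + 1) - η) ≤
      ((1 + (κ - σ) * (Δ k) ^ 2) / (1 + κ * (Δ k) ^ 2)) *
        ((ηhat k - η) ⬝ᵥ (ηhat k - η))) ∧
    (∀ k₁ k₂ : ℕ, k₁ ≤ k₂ →
      (ηhat k₂ - η) ⬝ᵥ (ηhat k₂ - η) ≤ (ηhat k₁ - η) ⬝ᵥ (ηhat k₁ - η)) := by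
  have hκ1 : (1 : ℝ) ≤ κ := le_trans (le_max_left _ _) hκ
  have key : ∀ k, (ηhat (k + 1) - η) ⬝ᵥ (ηhat (k + 1) - η) ≤
      ((1 + (κ - σ) * (Δ k) ^ 2) / (1 + κ * (Δ k) ^ 2)) *
        ((ηhat k - η) ⬝ᵥ (ηhat k - η)) := by
    intro k
    set D : ℝ := (Δ k) ^ 2 with hD
    have hD0 : 0 ≤ D := sq_nonneg _
    have hden : (0 : ℝ) < 1 + κ * D := by nlinarith
    set s : ℝ := D / (1 + κ * D) with hs
    have hs0 : 0 ≤ s := div_nonneg hD0 hden.le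
    have hs1 : s ≤ 1 := by
      have h1 : κ * s ≤ 1 := by
        rw [hs, mul_div_assoc']
        exact (div_le_one hden).mpr (by nlinarith)
      nlinarith
    set e : Fin q → ℝ := ηhat k - η with he
    set g : Fin q → ℝ := G (ηhat k) - G η with hg
    set w : Fin q → ℝ := P *ᵥ g with hw
    set c : ℝ := γ * s with hc
    have hc0 : 0 ≤ c := mul_nonneg hγ.le hs0
    have he' : ηhat (k + 1) - η = e - c • w := by
      rw [hstep k, he]
      abel
    have hV0 : 0 ≤ e ⬝ᵥ e := dot_self_nonneg e
    have hE : ρ * (e ⬝ᵥ e) ≤ e ⬝ᵥ w := hmono (ηhat k) η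
    have hgg : g ⬝ᵥ g ≤ ν ^ 2 * (e ⬝ᵥ e) := by
      have h1 : Real.sqrt (g ⬝ᵥ g) ≤ ν * Real.sqrt (e ⬝ᵥ e) := hlip (ηhat k) η
      nlinarith [Real.sq_sqrt (dot_self_nonneg g), Real.sq_sqrt (dot_self_nonneg e),
        Real.sqrt_nonneg (g ⬝ᵥ g), Real.sqrt_nonneg (e ⬝ᵥ e)]
    have hW : w ⬝ᵥ w ≤ lam ^ 2 * ν ^ 2 * (e ⬝ᵥ e) := by
      have h1 := spec_bound P hP hPsym lam hlam g
      nlinarith [sq_nonneg lam]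
    have hexp : (ηhat (k + 1) - η) ⬝ᵥ (ηhat (k + 1) - η)
        = e ⬝ᵥ e - 2 * c * (e ⬝ᵥ w) + c ^ 2 * (w ⬝ᵥ w) := by
      rw [he', dot_expand]
    have hfac : (1 + (κ - σ) * D) / (1 + κ * D) = 1 - σ * s := by
      rw [hs]
      field_simp
      ring
    have hfac2 : 1 - 2 * c * ρ + c ^ 2 * (lam ^ 2 * ν ^ 2) ≤ 1 - σ * s := by
      rw [hc, hσ]
      nlinarith [mul_nonneg hs0 (sub_nonneg.mpr hs1), sq_nonneg (γ * ν * lam), sq_nonneg s]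
    have step1 : (ηhat (k + 1) - η) ⬝ᵥ (ηhat (k + 1) - η)
        ≤ (1 - 2 * c * ρ + c ^ 2 * (lam ^ 2 * ν ^ 2)) * (e ⬝ᵥ e) := by
      rw [hexp]
      nlinarith [sq_nonneg c]
    calc (ηhat (k + 1) - η) ⬝ᵥ (ηhat (k + 1) - η)
        ≤ (1 - 2 * c * ρ + c ^ 2 * (lam ^ 2 * ν ^ 2)) * (e ⬝ᵥ e) := step1
      _ ≤ (1 - σ * s) * (e ⬝ᵥ e) := mul_le_mul_of_nonneg_right hfac2 hV0
      _ = ((1 + (κ - σ) * D) / (1 + κ * D)) * (e ⬝ᵥ e) := by rw [hfac]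
  refine ⟨key, ?_⟩
  have hone : ∀ k, (ηhat (k + 1) - η) ⬝ᵥ (ηhat (k + 1) - η)
      ≤ (ηhat k - η) ⬝ᵥ (ηhat k - η) := by
    intro k
    have h1 := key k
    have hD0 : (0 : ℝ) ≤ (Δ k) ^ 2 := sq_nonneg _
    have hden : (0 : ℝ) < 1 + κ * (Δ k) ^ 2 := by nlinarith
    have hfle : (1 + (κ - σ) * (Δ k) ^ 2) / (1 + κ * (Δ k) ^ 2) ≤ 1 := by
      rw [div_le_one hden]
      nlinarith
    have hV0 : 0 ≤ (ηhat k - η) ⬝ᵥ (ηhat k - η) := dot_self_nonneg _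
    calc (ηhat (k + 1) - η) ⬝ᵥ (ηhat (k + 1) - η)
        ≤ (1 + (κ - σ) * (Δ k) ^ 2) / (1 + κ * (Δ k) ^ 2) *
          ((ηhat k - η) ⬝ᵥ (ηhat k - η)) := h1
      _ ≤ 1 * ((ηhat k - η) ⬝ᵥ (ηhat k - η)) := mul_le_mul_of_nonneg_right hfle hV0
      _ = (ηhat k - η) ⬝ᵥ (ηhat k - η) := one_mul _
  intro k₁ k₂ h
  exact antitone_nat_of_succ_le (f := fun k => (ηhat k - η) ⬝ᵥ (ηhat k - η)) hone h
end

section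
/- Under the hypotheses of the discrete-time DREM estimator (G strongly P-monotone with constant ρ, globally ν-Lipschitz, σ := 2γρ − γ²ν²λ_max(P)² > 0, κ ≥ max{1,σ}), if the infinite product ∏_{i=0}^∞ (1 + (κ−σ)Δ(i)²)/(1 + κΔ(i)²) equals 0, then the iterates of η̂(k+1) = η̂(k) − γ·P·(Δ(k)²/(1+κΔ(k)²))·(G(η̂(k)) − G(η)) satisfy |η̂(k) − η| → 0 as k → ∞. -/
open Matrix
open scoped Topology

lemma aux_quad {q : ℕ} {P : Matrix (Fin q) (Fin q) ℝ} (hH : P.IsHermitian) (lam : ℝ)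
    (hpos : ∀ i, 0 < hH.eigenvalues i)
    (hlam : ∀ i, hH.eigenvalues i ≤ lam) (g : Fin q → ℝ) :
    (P *ᵥ g) ⬝ᵥ (P *ᵥ g) ≤ lam ^ 2 * (g ⬝ᵥ g) := by
  classical
  set U : Matrix (Fin q) (Fin q) ℝ := (hH.eigenvectorUnitary : Matrix (Fin q) (Fin q) ℝ) with hU
  have hstar : star U = Uᵀ := conjTranspose_eq_transpose_of_trivial U
  have h1 : Uᵀ * U = 1 := by
    rw [← hstar]; exact mem_unitaryGroup_iff'.mp (hH.eigenvectorUnitary).2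
  have h2 : U * Uᵀ = 1 := by
    rw [← hstar]; exact mem_unitaryGroup_iff.mp (hH.eigenvectorUnitary).2
  set c : Fin q → ℝ := Uᵀ *ᵥ g with hc
  have hg : U *ᵥ c = g := by
    rw [hc, mulVec_mulVec, h2, one_mulVec]
  have hortho : ∀ x : Fin q → ℝ, (U *ᵥ x) ⬝ᵥ (U *ᵥ x) = x ⬝ᵥ x := by
    intro x
    rw [dotProduct_mulVec, ← mulVec_transpose, mulVec_mulVec, h1, one_mulVec]
  have hPg : P *ᵥ g = U *ᵥ (fun i => hH.eigenvalues i * c i) := by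
    have hd : (fun i => hH.eigenvalues i * c i)
        = diagonal (RCLike.ofReal ∘ hH.eigenvalues) *ᵥ c := by
      ext i; simp [mulVec_diagonal]
    rw [hd, mulVec_mulVec, hc, mulVec_mulVec, ← hstar]
    exact congrArg (· *ᵥ g) hH.spectral_theorem
  rw [hPg, hortho, ← hg, hortho]
  have hsum : ∀ i : Fin q, hH.eigenvalues i * c i * (hH.eigenvalues i * c i)
      ≤ lam ^ 2 * (c i * c i) := by
    intro i
    have h0 : 0 < hH.eigenvalues i := hpos i
    have hl := hlam i
    nlinarith [mul_nonneg (mul_nonneg (sub_nonneg.mpr hl)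
      (by linarith : (0:ℝ) ≤ lam + hH.eigenvalues i)) (mul_self_nonneg (c i))]
  calc (fun i => hH.eigenvalues i * c i) ⬝ᵥ (fun i => hH.eigenvalues i * c i)
      = ∑ i, hH.eigenvalues i * c i * (hH.eigenvalues i * c i) := rfl
    _ ≤ ∑ i, lam ^ 2 * (c i * c i) := Finset.sum_le_sum fun i _ => hsum i
    _ = lam ^ 2 * (c ⬝ᵥ c) := by rw [← Finset.mul_sum]; rfl

/-- Proposition 4, Property P2: if the infinite product vanishes, the DT DREM
parameter error converges to zero. -/
theorem dt_drem_P2 {q : ℕ}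
    (η : Fin q → ℝ) (Δ : ℕ → ℝ)
    (P : Matrix (Fin q) (Fin q) ℝ) (hP : P.PosDef) (hPsym : P.IsSymm)
    (lam : ℝ) (hlam : IsGreatest (Set.range hP.1.eigenvalues) lam)
    (G : (Fin q → ℝ) → (Fin q → ℝ)) (ρ ν γ κ σ : ℝ)
    (hρ : 0 < ρ) (hν : 0 < ν) (hγ : 0 < γ)
    (hmono : ∀ a b : Fin q → ℝ,
      ρ * ((a - b) ⬝ᵥ (a - b)) ≤ (a - b) ⬝ᵥ (P *ᵥ (G a - G b)))
    (hlip : ∀ a b : Fin q → ℝ,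
      Real.sqrt ((G a - G b) ⬝ᵥ (G a - G b)) ≤ ν * Real.sqrt ((a - b) ⬝ᵥ (a - b)))
    (hσ : σ = 2 * γ * ρ - γ ^ 2 * ν ^ 2 * lam ^ 2) (hσpos : 0 < σ)
    (hκ : max 1 σ ≤ κ)
    (hprod : Filter.Tendsto
      (fun n => ∏ i ∈ Finset.range n,
        (1 + (κ - σ) * (Δ i) ^ 2) / (1 + κ * (Δ i) ^ 2))
      Filter.atTop (𝓝 0))
    (ηhat : ℕ → (Fin q → ℝ))
    (hstep : ∀ k, ηhat (k + 1) =
      ηhat k - (γ * ((Δ k) ^ 2 / (1 + κ * (Δ k) ^ 2))) • (P *ᵥ (G (ηhat k) - G η))) :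
    Filter.Tendsto (fun k => Real.sqrt ((ηhat k - η) ⬝ᵥ (ηhat k - η)))
      Filter.atTop (𝓝 0) := by
  have hκ1 : (1:ℝ) ≤ κ := le_trans (le_max_left _ _) hκ
  have hκσ : σ ≤ κ := le_trans (le_max_right _ _) hκ
  have hdn : ∀ x : Fin q → ℝ, 0 ≤ x ⬝ᵥ x :=
    fun x => Finset.sum_nonneg fun i _ => mul_self_nonneg (x i)
  have hden : ∀ k, (0:ℝ) < 1 + κ * Δ k ^ 2 := by
    intro k; nlinarith [sq_nonneg (Δ k)]
  set V : ℕ → ℝ := fun k => (ηhat k - η) ⬝ᵥ (ηhat k - η) with hVdef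
  have hV0 : ∀ k, 0 ≤ V k := fun k => hdn _
  set c : ℕ → ℝ := fun k => (1 + (κ - σ) * Δ k ^ 2) / (1 + κ * Δ k ^ 2) with hcdef
  have hc0 : ∀ k, 0 ≤ c k := by
    intro k
    apply div_nonneg _ (le_of_lt (hden k))
    nlinarith [sq_nonneg (Δ k)]
  have hquad : ∀ g : Fin q → ℝ, (P *ᵥ g) ⬝ᵥ (P *ᵥ g) ≤ lam ^ 2 * (g ⬝ᵥ g) :=
    aux_quad hP.1 lam (fun i => hP.eigenvalues_pos i)
      (fun i => hlam.2 (Set.mem_range_self i))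
  -- one-step Lyapunov inequality
  have hstepV : ∀ k, V (k + 1) ≤ c k * V k := by
    intro k
    set t : ℝ := Δ k ^ 2 / (1 + κ * Δ k ^ 2) with htdef
    have ht0 : 0 ≤ t := div_nonneg (sq_nonneg _) (le_of_lt (hden k))
    have htle : t ≤ Δ k ^ 2 := by
      rw [htdef, div_le_iff₀ (hden k)]
      nlinarith [mul_nonneg (mul_nonneg (le_trans zero_le_one hκ1) (sq_nonneg (Δ k))) (sq_nonneg (Δ k))]
    have hct : c k = 1 - σ * t := by
      rw [hcdef, htdef]
      field_simp
      ring
    set e : Fin q → ℝ := ηhat k - η with hedef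
    set g : Fin q → ℝ := G (ηhat k) - G η with hgdef
    set w : Fin q → ℝ := P *ᵥ g with hwdef
    have he' : ηhat (k + 1) - η = e - (γ * t) • w := by
      rw [hstep k, sub_right_comm]
    have hexp : V (k + 1) = e ⬝ᵥ e - 2 * (γ * t) * (e ⬝ᵥ w) + (γ * t) ^ 2 * (w ⬝ᵥ w) := by
      show (ηhat (k+1) - η) ⬝ᵥ (ηhat (k+1) - η) = _
      rw [he']
      simp only [sub_dotProduct, dotProduct_sub, smul_dotProduct, dotProduct_smul,
        smul_eq_mul, dotProduct_comm w e]
      ring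
    have hmo : ρ * (e ⬝ᵥ e) ≤ e ⬝ᵥ w := hmono (ηhat k) η
    have hli : g ⬝ᵥ g ≤ ν ^ 2 * (e ⬝ᵥ e) := by
      have h := hlip (ηhat k) η
      have h1 := hdn g
      have h2 := hdn e
      nlinarith [Real.sq_sqrt h1, Real.sq_sqrt h2, Real.sqrt_nonneg (g ⬝ᵥ g),
        Real.sqrt_nonneg (e ⬝ᵥ e), mul_self_le_mul_self (Real.sqrt_nonneg (g ⬝ᵥ g)) h]
    have hww : w ⬝ᵥ w ≤ lam ^ 2 * (ν ^ 2 * (e ⬝ᵥ e)) := by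
      refine le_trans (hquad g) ?_
      nlinarith [sq_nonneg lam]
    have hVk : V k = e ⬝ᵥ e := rfl
    have hd0 : 0 ≤ γ * t := mul_nonneg (le_of_lt hγ) ht0
    rw [hexp, hct, hVk]
    subst hσ
    set E := e ⬝ᵥ e with hEdef
    set A := e ⬝ᵥ w with hAdef
    set W := w ⬝ᵥ w with hWdef
    have h2d := mul_le_mul_of_nonneg_left hmo (by linarith : (0:ℝ) ≤ 2 * (γ * t))
    have hd2 := mul_le_mul_of_nonneg_left hww (sq_nonneg (γ * t))
    have ht1 : t ≤ 1 := by
      rw [htdef, div_le_one (hden k)]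
      nlinarith [sq_nonneg (Δ k)]
    have hE : 0 ≤ E := hdn e
    have hkey : 0 ≤ γ ^ 2 * ν ^ 2 * lam ^ 2 * (t * (1 - t)) * E :=
      mul_nonneg (mul_nonneg (by positivity) (mul_nonneg ht0 (by linarith))) hE
    clear_value t E A W
    clear hexp hVk he' hmo hww hli hcdef hct hprod hdn hquad hstep hV0 hc0 hlam hmono hlip hden
      hEdef hAdef hWdef htdef hedef hgdef hwdef hVdef
    clear_value V c e g w
    clear V c e g w
    linarith [h2d, hd2, hkey, hE]
  -- telescoping
  have hle : ∀ n, V n ≤ V 0 * ∏ i ∈ Finset.range n, c i := by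
    intro n
    induction n with
    | zero => simp
    | succ n ih =>
      rw [Finset.prod_range_succ, ← mul_assoc]
      calc V (n + 1) ≤ c n * V n := hstepV n
        _ ≤ c n * (V 0 * ∏ i ∈ Finset.range n, c i) :=
            mul_le_mul_of_nonneg_left ih (hc0 n)
        _ = V 0 * (∏ i ∈ Finset.range n, c i) * c n := by ring
  have hb : Filter.Tendsto (fun n => V 0 * ∏ i ∈ Finset.range n, c i)
      Filter.atTop (𝓝 0) := by
    have h := hprod.const_mul (V 0)
    rw [mul_zero] at h
    exact h
  have hVlim : Filter.Tendsto V Filter.atTop (𝓝 0) :=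
    squeeze_zero hV0 hle hb
  have := (Real.continuous_sqrt.tendsto' 0 0 Real.sqrt_zero).comp hVlim
  exact this
end

section
/- For η ∈ ℝ⁴ with η₁, η₂ > 0 and η₃ ≥ θ₄ᵐ·θ₂ᵐ > 0, bounds η₁ ≤ θ₁ᴹ, θ₂ᵐ ≤ η₂ ≤ θ₂ᴹ, and a > (η₁² + η₂²)/(4η₃), the 4×4 matrix M(η) with rows [2aη₃, 0, η₁, 0], [0, 2aη₃, η₂, 0], [η₁, η₂, 2, 0], [0, 0, 0, 2] is positive definite. -/
open Matrix

/-- Positive definiteness of P∇G + (∇G)ᵀP for the 2-DOF robot manipulator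
(Lemma 2). -/
theorem robot_demidovich_posdef
    (η : Fin 4 → ℝ) (a θ1M θ2m θ2M θ4m : ℝ)
    (h1 : 0 < η 0) (h2 : 0 < η 1)
    (hθ4m : 0 < θ4m) (hθ2m : 0 < θ2m)
    (hη3 : θ4m * θ2m ≤ η 2)
    (hη1 : η 0 ≤ θ1M) (hη2l : θ2m ≤ η 1) (hη2u : η 1 ≤ θ2M)
    (ha : (η 0 ^ 2 + η 1 ^ 2) / (4 * η 2) < a) :
    (!![2 * a * η 2, 0, η 0, 0;
        0, 2 * a * η 2, η 1, 0;
        η 0, η 1, 2, 0;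
        0, 0, 0, 2] : Matrix (Fin 4) (Fin 4) ℝ).PosDef := by
  have hη3pos : 0 < η 2 := lt_of_lt_of_le (mul_pos hθ4m hθ2m) hη3
  have hkey : η 0 ^ 2 + η 1 ^ 2 < 4 * η 2 * a := by
    have := (div_lt_iff₀ (by positivity : (0:ℝ) < 4 * η 2)).mp ha
    linarith [this]
  have hc : 0 < 2 * a * η 2 := by nlinarith [sq_nonneg (η 0), sq_nonneg (η 1)]
  refine Matrix.PosDef.of_dotProduct_mulVec_pos ?_ ?_
  · ext i j
    fin_cases i <;> fin_cases j <;> simp [Matrix.conjTranspose_apply]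
  · intro x hx
    set c := 2 * a * η 2 with hcdef
    have hq : x ⬝ᵥ (!![c, 0, η 0, 0;
        0, c, η 1, 0;
        η 0, η 1, 2, 0;
        0, 0, 0, 2] : Matrix (Fin 4) (Fin 4) ℝ) *ᵥ x
        = c * x 0 ^ 2 + c * x 1 ^ 2 + 2 * x 2 ^ 2 + 2 * x 3 ^ 2
          + 2 * η 0 * x 0 * x 2 + 2 * η 1 * x 1 * x 2 := by
      simp [Matrix.mulVec, dotProduct, Fin.sum_univ_four]
      ring
    rw [show star x = x from rfl, hq]
    have h2c : η 0 ^ 2 + η 1 ^ 2 < 2 * c := by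
      rw [hcdef]; nlinarith
    have hne : x 0 ≠ 0 ∨ x 1 ≠ 0 ∨ x 2 ≠ 0 ∨ x 3 ≠ 0 := by
      by_contra h
      push_neg at h
      apply hx
      funext i
      fin_cases i <;> simp [h.1, h.2.1, h.2.2.1, h.2.2.2]
    have key : 0 < c * (c * x 0 ^ 2 + c * x 1 ^ 2 + 2 * x 2 ^ 2 + 2 * x 3 ^ 2
          + 2 * η 0 * x 0 * x 2 + 2 * η 1 * x 1 * x 2) := by
      have e : c * (c * x 0 ^ 2 + c * x 1 ^ 2 + 2 * x 2 ^ 2 + 2 * x 3 ^ 2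
          + 2 * η 0 * x 0 * x 2 + 2 * η 1 * x 1 * x 2)
          = (c * x 0 + η 0 * x 2) ^ 2 + (c * x 1 + η 1 * x 2) ^ 2
            + (2 * c - η 0 ^ 2 - η 1 ^ 2) * x 2 ^ 2 + 2 * c * x 3 ^ 2 := by ring
      rw [e]
      have hsq : ∀ y : ℝ, y ≠ 0 → 0 < y ^ 2 := fun y hy => by positivity
      have hA : 0 ≤ (c * x 0 + η 0 * x 2) ^ 2 := sq_nonneg _
      have hB : 0 ≤ (c * x 1 + η 1 * x 2) ^ 2 := sq_nonneg _
      have hC : 0 ≤ (2 * c - η 0 ^ 2 - η 1 ^ 2) * x 2 ^ 2 :=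
        mul_nonneg (by linarith) (sq_nonneg _)
      have hD : 0 ≤ 2 * c * x 3 ^ 2 := mul_nonneg (by linarith) (sq_nonneg _)
      rcases hne with h | h | h | h
      · rcases eq_or_ne (x 2) 0 with h2 | h2
        · have hA' : 0 < (c * x 0 + η 0 * x 2) ^ 2 := by
            rw [h2]; simpa using hsq _ (mul_ne_zero hc.ne' h)
          linarith
        · have hC' : 0 < (2 * c - η 0 ^ 2 - η 1 ^ 2) * x 2 ^ 2 :=
            mul_pos (by linarith) (hsq _ h2)
          linarith
      · rcases eq_or_ne (x 2) 0 with h2 | h2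
        · have hB' : 0 < (c * x 1 + η 1 * x 2) ^ 2 := by
            rw [h2]; simpa using hsq _ (mul_ne_zero hc.ne' h)
          linarith
        · have hC' : 0 < (2 * c - η 0 ^ 2 - η 1 ^ 2) * x 2 ^ 2 :=
            mul_pos (by linarith) (hsq _ h2)
          linarith
      · have hC' : 0 < (2 * c - η 0 ^ 2 - η 1 ^ 2) * x 2 ^ 2 :=
          mul_pos (by linarith) (hsq _ h)
        linarith
      · have hD' : 0 < 2 * c * x 3 ^ 2 := mul_pos (by linarith) (hsq _ h)
        linarith
    have := div_pos key hc
    rwa [mul_div_cancel_left₀ _ hc.ne'] at this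
end
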